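/- For a normalized operator O (Frobenius norm 1) with singular values {γ_l} and Pauli coefficients b_k = 2^{-n/2} Tr(P_k O), for every α ≥ 0 the BBC-Rényi entropy satisfies H_α({|b_k|^2}) ≥ n - 2 log(Σ_l γ_l) = n - H_{1/2}({γ_l^2}). -/

import Mathlib

/-!
Write `O = R Σ C`. Then `Tr(P O) = Tr((C P R) Σ)` with `C P R` unitary, whose diagonal entries
have modulus at most `1`; hence `|Tr(P O)| ≤ ∑ γ_l` and every `|b_P|²` is at most
`M = 2^{-n} (∑ γ_l)²`. The completeness relation `∑_P P_ij conj(P_kl) = 2^n δ_ik δ_jl` of the Pauli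
operators gives Parseval's identity `∑_P |b_P|² = ‖O‖_F² = 1`. Finally, every Rényi entropy of a
probability vector with entries at most `M` is at least the min-entropy bound `-log M`: for
`α < 1` because `p^α ≥ p M^{α-1}`, for `α > 1` because `p^α ≤ p M^{α-1}`.
-/

open scoped ENNReal BigOperators
open Matrix

/-- The α-order Rényi entropy (log base 2). -/
noncomputable def renyiEntropy {ι : Type*} [Fintype ι] (α : ℝ≥0∞) (p : ι → ℝ) : ℝ :=
  if α = 0 then Real.logb 2 (Nat.card {i : ι | p i ≠ 0})
  else if α = 1 then -∑ i, p i * Real.logb 2 (p i)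
  else if α = ⊤ then -(Real.logb 2 (⨆ i, p i))
  else (1 - α.toReal)⁻¹ * Real.logb 2 (∑ i, p i ^ α.toReal)

/-- The four single-qubit Pauli matrices `I, X, Y, Z`. -/
noncomputable def pauli1 (k : Fin 4) : Matrix (Fin 2) (Fin 2) ℂ :=
  if k = 0 then !![1, 0; 0, 1]
  else if k = 1 then !![0, 1; 1, 0]
  else if k = 2 then !![0, -Complex.I; Complex.I, 0]
  else !![1, 0; 0, -1]

/-- The `n`-qubit Pauli operator labelled by a Pauli string. -/
noncomputable def pauliOp (n : ℕ) (P : Fin n → Fin 4) :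
    Matrix (Fin n → Fin 2) (Fin n → Fin 2) ℂ :=
  fun i j => ∏ t, pauli1 (P t) (i t) (j t)

lemma pauli1_completeness (a b c d : Fin 2) :
    ∑ k : Fin 4, pauli1 k a b * star (pauli1 k c d) = if a = c ∧ b = d then 2 else 0 := by
  fin_cases a <;> fin_cases b <;> fin_cases c <;> fin_cases d <;>
    simp [pauli1, Fin.sum_univ_four, Complex.ext_iff] <;> norm_num

lemma pauli1_mem_unitaryGroup (k : Fin 4) : pauli1 k ∈ unitaryGroup (Fin 2) ℂ := by
  rw [mem_unitaryGroup_iff]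
  ext x y
  fin_cases k <;> fin_cases x <;> fin_cases y <;>
    simp [pauli1, mul_apply, Fin.sum_univ_two]

lemma pauliOp_mul_star_apply (n : ℕ) (P : Fin n → Fin 4) (i j k l : Fin n → Fin 2) :
    pauliOp n P i j * star (pauliOp n P k l)
      = ∏ t, pauli1 (P t) (i t) (j t) * star (pauli1 (P t) (k t) (l t)) := by
  rw [pauliOp, pauliOp, star_prod, Finset.prod_mul_distrib]

lemma pauliOp_completeness (n : ℕ) (i j k l : Fin n → Fin 2) :
    ∑ P : Fin n → Fin 4, pauliOp n P i j * star (pauliOp n P k l)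
      = if i = k ∧ j = l then (2 : ℂ) ^ n else 0 := by
  simp_rw [pauliOp_mul_star_apply]
  rw [← Fintype.prod_sum fun t s => pauli1 s (i t) (j t) * star (pauli1 s (k t) (l t))]
  simp_rw [pauli1_completeness, Fintype.prod_ite_zero, forall_and, ← funext_iff,
    Finset.prod_const, Finset.card_univ, Fintype.card_fin]

lemma pauliOp_mem_unitaryGroup (n : ℕ) (P : Fin n → Fin 4) :
    pauliOp n P ∈ unitaryGroup (Fin n → Fin 2) ℂ := by
  rw [mem_unitaryGroup_iff]
  ext x y
  have h t := congr_fun₂ (mem_unitaryGroup_iff.mp (pauli1_mem_unitaryGroup (P t))) (x t) (y t)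
  simp only [mul_apply, star_apply, one_apply] at h ⊢
  simp_rw [pauliOp_mul_star_apply]
  rw [← Fintype.prod_sum fun t s => pauli1 (P t) (x t) s * star (pauli1 (P t) (y t) s)]
  simp_rw [h, Fintype.prod_boole, ← funext_iff]

lemma sum_norm_sq_trace_mul_eq {κ m : Type*} [Fintype κ] [Fintype m] [DecidableEq m]
    (B : κ → Matrix m m ℂ) (c : ℝ)
    (hB : ∀ i j k l, ∑ P, B P i j * star (B P k l) = if i = k ∧ j = l then (c : ℂ) else 0)
    (O : Matrix m m ℂ) :
    ∑ P, ‖(B P * O).trace‖ ^ 2 = c * ∑ i, ∑ j, ‖O i j‖ ^ 2 := by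
  have htrace (A : Matrix m m ℂ) : (A * O).trace = ∑ p : m × m, A p.1 p.2 * O p.2 p.1 := by
    simp [trace, mul_apply, Fintype.sum_prod_type]
  have hB' (p q : m × m) :
      ∑ P, B P p.1 p.2 * star (B P q.1 q.2) = if p = q then (c : ℂ) else 0 := by
    simp only [hB, Prod.ext_iff]
  apply Complex.ofReal_injective
  push_cast
  simp_rw [← Complex.mul_conj', htrace, ← Complex.star_def, star_sum, Finset.sum_mul_sum, star_mul']
  calc ∑ P, ∑ p : m × m, ∑ q : m × m,
        B P p.1 p.2 * O p.2 p.1 * (star (B P q.1 q.2) * star (O q.2 q.1))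
      = ∑ p : m × m, ∑ q : m × m,
        (∑ P, B P p.1 p.2 * star (B P q.1 q.2)) * (O p.2 p.1 * star (O q.2 q.1)) := by
        rw [Finset.sum_comm]
        refine Finset.sum_congr rfl fun p _ => ?_
        simp_rw [Finset.sum_mul, mul_mul_mul_comm]
        exact Finset.sum_comm
    _ = c * ∑ p : m × m, O p.2 p.1 * star (O p.2 p.1) := by
        simp only [hB', ite_mul, zero_mul, Finset.sum_ite_eq, Finset.mem_univ, if_true,
          Finset.mul_sum]
    _ = _ := by rw [Fintype.sum_prod_type, Finset.sum_comm]

lemma norm_trace_mul_diagonal_le {𝕜 m : Type*} [RCLike 𝕜] [Fintype m] [DecidableEq m]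
    {U : Matrix m m 𝕜} (hU : U ∈ unitaryGroup m 𝕜) {γ : m → ℝ} (hγ : ∀ l, 0 ≤ γ l) :
    ‖(U * diagonal fun l => (γ l : 𝕜)).trace‖ ≤ ∑ l, γ l := by
  simp only [trace, diag, mul_diagonal]
  refine (norm_sum_le _ _).trans (Finset.sum_le_sum fun l _ => ?_)
  rw [norm_mul, RCLike.norm_ofReal, abs_of_nonneg (hγ l)]
  exact mul_le_of_le_one_left (hγ l) (entry_norm_bound_of_unitary hU l l)

lemma norm_trace_mul_svd_le {𝕜 m : Type*} [RCLike 𝕜] [Fintype m] [DecidableEq m]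
    {V R C : Matrix m m 𝕜} (hV : V ∈ unitaryGroup m 𝕜) (hR : R ∈ unitaryGroup m 𝕜)
    (hC : C ∈ unitaryGroup m 𝕜) {γ : m → ℝ} (hγ : ∀ l, 0 ≤ γ l) :
    ‖(V * (R * (diagonal fun l => (γ l : 𝕜)) * C)).trace‖ ≤ ∑ l, γ l := by
  have hcyc : (V * (R * (diagonal fun l => (γ l : 𝕜)) * C)).trace
      = (C * V * R * diagonal fun l => (γ l : 𝕜)).trace := by
    rw [Matrix.mul_assoc (C * V), Matrix.mul_assoc C, trace_mul_comm C]
    simp only [Matrix.mul_assoc]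
  rw [hcyc]
  exact norm_trace_mul_diagonal_le (mul_mem (mul_mem hC hV) hR) hγ

section RenyiLowerBound

variable {ι : Type*} [Fintype ι] {p : ι → ℝ} {M : ℝ}

lemma exists_pos_of_sum_eq_one (hsum : ∑ i, p i = 1) : ∃ i, 0 < p i := by
  simpa using Finset.exists_lt_of_sum_lt (f := fun _ => 0) (s := Finset.univ) (by simp [hsum])

lemma pos_of_sum_eq_one_of_le (hsum : ∑ i, p i = 1) (hle : ∀ i, p i ≤ M) : 0 < M :=
  let ⟨i, hi⟩ := exists_pos_of_sum_eq_one hsum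
  hi.trans_le (hle i)

lemma neg_logb_le_logb_card_support (hsum : ∑ i, p i = 1) (hle : ∀ i, p i ≤ M) :
    -Real.logb 2 M ≤ Real.logb 2 (Nat.card {i | p i ≠ 0}) := by
  classical
  have hM := pos_of_sum_eq_one_of_le hsum hle
  have hcard : 1 ≤ (Nat.card {i | p i ≠ 0} : ℝ) * M := by
    calc (1 : ℝ) = ∑ i ∈ Finset.univ.filter (p · ≠ 0), p i := by
          rw [Finset.sum_filter_ne_zero, hsum]
      _ ≤ ∑ _i ∈ Finset.univ.filter (p · ≠ 0), M := Finset.sum_le_sum fun i _ => hle i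
      _ = _ := by simp [Nat.card_eq_fintype_card, Fintype.card_subtype]
  rw [← Real.logb_inv]
  exact Real.logb_le_logb_of_le one_lt_two (inv_pos.mpr hM)
    ((inv_le_iff_one_le_mul₀ hM).mpr hcard)

lemma neg_logb_le_shannon (hp : ∀ i, 0 ≤ p i) (hsum : ∑ i, p i = 1) (hle : ∀ i, p i ≤ M) :
    -Real.logb 2 M ≤ -∑ i, p i * Real.logb 2 (p i) := by
  have hterm (i : ι) : p i * Real.logb 2 (p i) ≤ p i * Real.logb 2 M := by
    rcases (hp i).eq_or_lt with h | h
    · simp [← h]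
    · exact mul_le_mul_of_nonneg_left (Real.logb_le_logb_of_le one_lt_two h (hle i)) (hp i)
  have := Finset.sum_le_sum fun i (_ : i ∈ Finset.univ) => hterm i
  rw [← Finset.sum_mul, hsum, one_mul] at this
  linarith

lemma neg_logb_le_neg_logb_iSup (hsum : ∑ i, p i = 1) (hle : ∀ i, p i ≤ M) :
    -Real.logb 2 M ≤ -Real.logb 2 (⨆ i, p i) := by
  obtain ⟨i, hi⟩ := exists_pos_of_sum_eq_one hsum
  have : Nonempty ι := ⟨i⟩
  have hsup : 0 < ⨆ i, p i := hi.trans_le (le_ciSup (Set.finite_range p).bddAbove i)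
  exact neg_le_neg (Real.logb_le_logb_of_le one_lt_two hsup (ciSup_le hle))

lemma rpow_sub_one_le_sum_rpow (hp : ∀ i, 0 ≤ p i) (hsum : ∑ i, p i = 1)
    (hle : ∀ i, p i ≤ M) {a : ℝ} (ha0 : 0 < a) (ha1 : a < 1) :
    M ^ (a - 1) ≤ ∑ i, p i ^ a := by
  have hterm (i : ι) : p i * M ^ (a - 1) ≤ p i ^ a := by
    rcases (hp i).eq_or_lt with h | h
    · simp [← h, Real.zero_rpow ha0.ne']
    · rw [← le_div_iff₀' h, ← Real.rpow_sub_one h.ne']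
      exact Real.rpow_le_rpow_of_nonpos h (hle i) (by linarith)
  calc M ^ (a - 1) = ∑ i, p i * M ^ (a - 1) := by rw [← Finset.sum_mul, hsum, one_mul]
    _ ≤ ∑ i, p i ^ a := Finset.sum_le_sum fun i _ => hterm i

lemma sum_rpow_le_rpow_sub_one (hp : ∀ i, 0 ≤ p i) (hsum : ∑ i, p i = 1)
    (hle : ∀ i, p i ≤ M) {a : ℝ} (ha1 : 1 < a) :
    ∑ i, p i ^ a ≤ M ^ (a - 1) := by
  have hterm (i : ι) : p i ^ a ≤ p i * M ^ (a - 1) := by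
    rcases (hp i).eq_or_lt with h | h
    · simp [← h, Real.zero_rpow (by linarith : a ≠ 0)]
    · rw [← div_le_iff₀' h, ← Real.rpow_sub_one h.ne']
      exact Real.rpow_le_rpow h.le (hle i) (by linarith)
  calc ∑ i, p i ^ a ≤ ∑ i, p i * M ^ (a - 1) := Finset.sum_le_sum fun i _ => hterm i
    _ = M ^ (a - 1) := by rw [← Finset.sum_mul, hsum, one_mul]

lemma neg_logb_le_renyi_rpow (hp : ∀ i, 0 ≤ p i) (hsum : ∑ i, p i = 1)
    (hle : ∀ i, p i ≤ M) {a : ℝ} (ha0 : 0 < a) (ha1 : a ≠ 1) :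
    -Real.logb 2 M ≤ (1 - a)⁻¹ * Real.logb 2 (∑ i, p i ^ a) := by
  have hM := pos_of_sum_eq_one_of_le hsum hle
  have hMa : -Real.logb 2 M = (1 - a)⁻¹ * Real.logb 2 (M ^ (a - 1)) := by
    rw [Real.logb_rpow_eq_mul_logb_of_pos hM]
    field_simp [sub_ne_zero.mpr ha1.symm]
    ring
  rw [hMa]
  rcases ha1.lt_or_gt with ha1 | ha1
  · gcongr
    · linarith
    · exact rpow_sub_one_le_sum_rpow hp hsum hle ha0 ha1
  · obtain ⟨i, hi⟩ := exists_pos_of_sum_eq_one hsum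
    have hS : 0 < ∑ i, p i ^ a := Finset.sum_pos' (fun i _ => Real.rpow_nonneg (hp i) a)
      ⟨i, Finset.mem_univ i, Real.rpow_pos_of_pos hi a⟩
    refine mul_le_mul_of_nonpos_left ?_ (inv_nonpos.mpr (by linarith))
    exact Real.logb_le_logb_of_le one_lt_two hS (sum_rpow_le_rpow_sub_one hp hsum hle ha1)

theorem renyiEntropy_ge_neg_logb (hp : ∀ i, 0 ≤ p i) (hsum : ∑ i, p i = 1)
    (hle : ∀ i, p i ≤ M) (α : ℝ≥0∞) : -Real.logb 2 M ≤ renyiEntropy α p := by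
  unfold renyiEntropy
  split_ifs with h0 h1 htop
  · exact neg_logb_le_logb_card_support hsum hle
  · exact neg_logb_le_shannon hp hsum hle
  · exact neg_logb_le_neg_logb_iSup hsum hle
  · refine neg_logb_le_renyi_rpow hp hsum hle (ENNReal.toReal_pos h0 htop) fun h => h1 ?_
    rw [← ENNReal.ofReal_toReal htop, h, ENNReal.ofReal_one]

end RenyiLowerBound

lemma renyiEntropy_half_sq {ι : Type*} [Fintype ι] {γ : ι → ℝ} (hγ : ∀ l, 0 ≤ γ l) :
    renyiEntropy (1 / 2) (fun l => γ l ^ 2) = 2 * Real.logb 2 (∑ l, γ l) := by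
  have hhalf : (1 / 2 : ℝ≥0∞).toReal = 1 / 2 := by simp
  have hsqrt (l : ι) : (γ l ^ 2) ^ (1 / 2 : ℝ) = γ l := by
    rw [← Real.sqrt_eq_rpow, Real.sqrt_sq (hγ l)]
  simp only [renyiEntropy, hhalf, hsqrt]
  norm_num

/-- BBC lower bound from TE: for a Frobenius-norm-1 operator `O = R Σ C` (SVD with
singular values `γ`, `∑ γ² = 1`) and Pauli coefficients `b_P = 2^{-n/2} Tr(P O)`,
for every `α ≥ 0` the BBC-Rényi entropy satisfies
`H_α({|b_P|²}) ≥ n - 2 log₂(∑ γ_l) = n - H_{1/2}({γ_l²})`. -/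
theorem bbc_lower_bound (n : ℕ)
    (O R C : Matrix (Fin n → Fin 2) (Fin n → Fin 2) ℂ)
    (hR : R ∈ Matrix.unitaryGroup (Fin n → Fin 2) ℂ)
    (hC : C ∈ Matrix.unitaryGroup (Fin n → Fin 2) ℂ)
    (γ : (Fin n → Fin 2) → ℝ)
    (hO : O = R * Matrix.diagonal (fun l => (γ l : ℂ)) * C)
    (hFro : ∑ i, ∑ j, ‖O i j‖ ^ 2 = 1)
    (hγ : ∀ l, 0 ≤ γ l) (hγs : ∑ l, γ l ^ 2 = 1) :
    (∀ α : ℝ≥0∞,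
      renyiEntropy α
          (fun P : Fin n → Fin 4 =>
            ‖(((2 : ℝ) ^ (-(n : ℝ) / 2) : ℝ) : ℂ) * (pauliOp n P * O).trace‖ ^ 2)
        ≥ n - 2 * Real.logb 2 (∑ l, γ l)) ∧
    renyiEntropy (1 / 2) (fun l => γ l ^ 2) = 2 * Real.logb 2 (∑ l, γ l) := by
  have hcoeff (P : Fin n → Fin 4) :
      ‖(((2 : ℝ) ^ (-(n : ℝ) / 2) : ℝ) : ℂ) * (pauliOp n P * O).trace‖ ^ 2
        = (2 : ℝ) ^ (-(n : ℝ)) * ‖(pauliOp n P * O).trace‖ ^ 2 := by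
    rw [norm_mul, mul_pow, Complex.norm_real, Real.norm_of_nonneg (by positivity),
      ← Real.rpow_natCast, ← Real.rpow_mul zero_le_two]
    norm_num
  have hparseval := sum_norm_sq_trace_mul_eq (pauliOp n) (2 ^ n)
    (by push_cast; exact pauliOp_completeness n) O
  have hsum : ∑ P, ‖(((2 : ℝ) ^ (-(n : ℝ) / 2) : ℝ) : ℂ) * (pauliOp n P * O).trace‖ ^ 2 = 1 := by
    rw [Finset.sum_congr rfl fun P _ => hcoeff P, ← Finset.mul_sum, hparseval, hFro, mul_one,
      Real.rpow_neg zero_le_two, Real.rpow_natCast, inv_mul_cancel₀ (by positivity)]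
  have hle (P : Fin n → Fin 4) :
      ‖(((2 : ℝ) ^ (-(n : ℝ) / 2) : ℝ) : ℂ) * (pauliOp n P * O).trace‖ ^ 2
        ≤ (2 : ℝ) ^ (-(n : ℝ)) * (∑ l, γ l) ^ 2 := by
    rw [hcoeff, hO]
    gcongr
    exact norm_trace_mul_svd_le (pauliOp_mem_unitaryGroup n P) hR hC hγ
  refine ⟨fun α => ?_, renyiEntropy_half_sq hγ⟩
  have hγpos : 0 < ∑ l, γ l := by
    obtain ⟨l, hl⟩ := exists_pos_of_sum_eq_one hγs
    have hγl : 0 < γ l := (hγ l).lt_of_ne (sq_pos_iff.mp hl).symm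
    exact hγl.trans_le (Finset.single_le_sum (fun l _ => hγ l) (Finset.mem_univ l))
  have hbound := renyiEntropy_ge_neg_logb (fun P => sq_nonneg _) hsum hle α
  rwa [Real.logb_mul (by positivity) (by positivity), Real.logb_rpow zero_lt_two (by norm_num),
    Real.logb_pow, neg_add, neg_neg, Nat.cast_ofNat, ← sub_eq_add_neg] at hbound
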